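/- A T₀ topological space X is metrizable if and only if there is a sequence of open covers {𝒰_n}_{n≥1} such that for every x ∈ X the sets {st(x, st(𝒰_n))}_{n≥1} form a neighborhood basis at x. (This includes, as a corollary, Moore's metrization theorem: X is metrizable iff it is T₀ and there is a sequence of open covers 𝒰_n such that for each x and each open neighborhood U of x there exist n and a neighborhood V of x with st(V,𝒰_n) ⊆ U.) -/

import Mathlib

noncomputable section
open Set Topology TopologicalSpace

/-- `𝒰` is an open cover of `X`. -/
def IsOpenCover {X : Type} [TopologicalSpace X] (𝒰 : Set (Set X)) : Prop :=
  (∀ U ∈ 𝒰, IsOpen U) ∧ ⋃₀ 𝒰 = univ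

/-- Star of a point with respect to a family of sets. -/
def ptStar {X : Type} (x : X) (𝒰 : Set (Set X)) : Set X := ⋃₀ {U | U ∈ 𝒰 ∧ x ∈ U}

/-- Star of a set with respect to a family of sets. -/
def setStar {X : Type} (A : Set X) (𝒰 : Set (Set X)) : Set X :=
  ⋃₀ {U | U ∈ 𝒰 ∧ (U ∩ A).Nonempty}

/-- `𝒱` star-refines `𝒰`. -/
def StarRefines {X : Type} (𝒱 𝒰 : Set (Set X)) : Prop :=
  ∀ x : X, ∃ U ∈ 𝒰, ptStar x 𝒱 ⊆ U

/-- A continuous partition of unity viewed as a map into `l¹(S)` with image in `Δ(S)`. -/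
def IsPU {X S : Type} [TopologicalSpace X] (f : X → lp (fun _ : S => ℝ) 1) : Prop :=
  Continuous f ∧ ∀ x : X, (∀ s : S, 0 ≤ f x s) ∧ HasSum (fun s => f x s) 1

/-- The partition of unity `f` is `𝒰`-small: each carrier lies in a member of `𝒰`. -/
def IsUSmall {X S : Type} [TopologicalSpace X] (𝒰 : Set (Set X))
    (f : X → lp (fun _ : S => ℝ) 1) : Prop :=
  ∀ s : S, ∃ U ∈ 𝒰, {x : X | f x s ≠ 0} ⊆ U

/-- There exists a `𝒰`-small partition of unity on `X`. -/
def ExistsUSmallPU {X : Type} [TopologicalSpace X] (𝒰 : Set (Set X)) : Prop :=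
  ∃ (S : Type) (f : X → lp (fun _ : S => ℝ) 1), IsPU f ∧ IsUSmall 𝒰 f

/-- An indexed family of sets is discrete. -/
def DiscreteFam {X S : Type} [TopologicalSpace X] (A : S → Set X) : Prop :=
  ∀ x : X, ∃ N ∈ nhds x, {s : S | (A s ∩ N).Nonempty}.Subsingleton

/-- A family of sets (as a set of sets) is discrete. -/
def DiscreteSetFam {X : Type} [TopologicalSpace X] (𝒜 : Set (Set X)) : Prop :=
  ∀ x : X, ∃ N ∈ nhds x, {A | A ∈ 𝒜 ∧ (A ∩ N).Nonempty}.Subsingleton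

/-- `𝒰` has a σ-discrete closed refinement. -/
def HasSigmaDiscreteClosedRefinement {X : Type} [TopologicalSpace X]
    (𝒰 : Set (Set X)) : Prop :=
  ∃ D : ℕ → Set (Set X), (∀ n, DiscreteSetFam (D n)) ∧
    (∀ n, ∀ F ∈ D n, IsClosed F) ∧
    (∀ n, ∀ F ∈ D n, ∃ U ∈ 𝒰, F ⊆ U) ∧
    ⋃₀ (⋃ n, D n) = univ

/-- `X` is collectionwise normal. -/
def CwNormal (X : Type) [TopologicalSpace X] : Prop :=
  ∀ (S : Type) (A : S → Set X), (∀ s, IsClosed (A s)) → DiscreteFam A →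
    ∃ V : S → Set X, (∀ s, IsOpen (V s)) ∧ (∀ s, A s ⊆ V s) ∧ DiscreteFam V

/-! In a metric space the covers by balls of radius `1 / (n + 1)` work, since the double star
of such a cover around `x` lies in the ball of radius `4 / (n + 1)`.

Conversely, say that `x` and `y` are `n`-close if they share a member of each of
`𝒰₀, …, 𝒰ₙ`. If an `a`-ball around `x` meets a `b`-ball around `y` and `a ≤ b`, then `y` lies
in the `a`-star of `x`; this substitute for the triangle inequality makes `X` normal and
collectionwise normal. Choose for each `p` an open set of pairwise `n`-close points around `p`.
Well-ordering `X` and sending each point to the first of these sets containing it (Stone's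
trick) gives, for every `n`, countably many discrete closed families that together cover `X`
and whose members lie in these sets. Urysohn functions supported on discrete open
expansions of such a family define a continuous map into `ℓ^∞`, and countably many of these
maps embed `X` into a countable product of metric spaces. -/

open Filter Function
open scoped ENNReal

theorem pseudoMetrizableSpace_of_countable_initial {X ι : Type*} [TopologicalSpace X]
    [Countable ι] {Y : ι → Type*} [∀ i, PseudoMetricSpace (Y i)] {f : ∀ i, X → Y i}
    (hf : ∀ i, Continuous (f i)) (h : ∀ x, ∀ U ∈ 𝓝 x, ∃ i, ∃ V ∈ 𝓝 (f i x), f i ⁻¹' V ⊆ U) :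
    PseudoMetrizableSpace X := by
  refine IsInducing.pseudoMetrizableSpace (f := fun x i => f i x) <| isInducing_iff_nhds.2
    fun x => le_antisymm (continuous_pi hf).continuousAt.le_comap fun U hU => ?_
  obtain ⟨i, V, hV, hVU⟩ := h x U hU
  exact mem_comap.2 ⟨_, (continuous_apply i).continuousAt hV, hVU⟩

theorem exists_continuous_lp_infty_of_locallyFinite {X S : Type*} [TopologicalSpace X]
    [NormalSpace X] {C W : S → Set X} (hC : ∀ s, IsClosed (C s)) (hW : ∀ s, IsOpen (W s))
    (hCW : ∀ s, C s ⊆ W s) (hWf : LocallyFinite W) :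
    ∃ e : X → lp (fun _ : S => ℝ) ∞, Continuous e ∧
      ∀ s x y, x ∈ C s → dist (e x) (e y) < 1 → y ∈ W s := by
  classical
  choose φ hφW hφC hφ01 using fun s => exists_continuous_zero_one_of_isClosed
    (hW s).isClosed_compl (hC s) (disjoint_compl_left_iff_subset.2 (hCW s))
  have hφ : ∀ s x, x ∉ W s → φ s x = 0 := fun s x hx => hφW s hx
  let e : X → lp (fun _ : S => ℝ) ∞ := fun x =>
    ⟨fun s => φ s x, memℓp_infty ⟨1, by
      rintro _ ⟨s, rfl⟩
      simpa [abs_le] using ⟨(hφ01 s x).1.trans' (by norm_num), (hφ01 s x).2⟩⟩⟩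
  refine ⟨e, continuous_iff_continuousAt.2 fun z => ?_, fun s x y hx hxy => ?_⟩
  · -- near `z` only the finitely many `φ s` with `W s` meeting `N` can be nonzero
    obtain ⟨N, hN, hT⟩ := hWf z
    have hloc : (fun y => ∑ s ∈ hT.toFinset, φ s y • lp.single ∞ s (1 : ℝ)) =ᶠ[𝓝 z] e := by
      filter_upwards [hN] with y hy
      ext t
      simp only [lp.coeFn_sum, Finset.sum_apply, lp.coeFn_smul, Pi.smul_apply, lp.single_apply]
      rw [Finset.sum_eq_single t (fun s _ hst => by simp [hst.symm]) fun ht => ?_]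
      · simp [e]
      · rw [hφ t y fun hyW => ht (hT.mem_toFinset.2 ⟨y, hyW, hy⟩), zero_smul]
    exact (continuous_finsetSum _ fun s _ => (φ s).continuous.smul continuous_const).continuousAt
      |>.congr hloc
  · by_contra hy
    have hdist : |e x s - e y s| ≤ dist (e x) (e y) := by
      simpa [dist_eq_norm] using lp.norm_apply_le_norm ENNReal.top_ne_zero (e x - e y) s
    rw [show e x s = 1 from hφC s hx, show e y s = 0 from hφ s y hy] at hdist
    norm_num at hdist
    linarith

theorem DiscreteFam.locallyFinite {X S : Type} [TopologicalSpace X] {A : S → Set X}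
    (h : DiscreteFam A) : LocallyFinite A := fun x =>
  let ⟨N, hN, hsub⟩ := h x
  ⟨N, hN, hsub.finite⟩

section ptStar

variable {X : Type} {x y : X} {𝒰 : Set (Set X)}

theorem mem_ptStar : y ∈ ptStar x 𝒰 ↔ ∃ U ∈ 𝒰, x ∈ U ∧ y ∈ U := by
  simp [ptStar, and_assoc]

theorem mem_ptStar_comm : y ∈ ptStar x 𝒰 ↔ x ∈ ptStar y 𝒰 := by
  simp only [mem_ptStar, and_comm (a := x ∈ _)]

theorem IsOpenCover.exists_mem [TopologicalSpace X] (h : IsOpenCover 𝒰) (x : X) :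
    ∃ U ∈ 𝒰, x ∈ U :=
  mem_sUnion.1 (h.2 ▸ mem_univ x)

theorem IsOpenCover.isOpen_ptStar [TopologicalSpace X] (h : IsOpenCover 𝒰) (x : X) :
    IsOpen (ptStar x 𝒰) :=
  isOpen_sUnion fun U hU => h.1 U hU.1

theorem IsOpenCover.mem_ptStar_self [TopologicalSpace X] (h : IsOpenCover 𝒰) (x : X) :
    x ∈ ptStar x 𝒰 :=
  let ⟨U, hU, hxU⟩ := h.exists_mem x
  mem_ptStar.2 ⟨U, hU, hxU, hxU⟩

theorem ptStar_balls_subset [PseudoMetricSpace X] (x : X) (r : ℝ) :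
    ptStar x (range fun c => Metric.ball c r) ⊆ Metric.ball x (2 * r) := by
  intro z hz
  obtain ⟨_, ⟨c, rfl⟩, hxc, hzc⟩ := mem_ptStar.1 hz
  rw [Metric.mem_ball] at *
  linarith [dist_triangle_right z x c]

theorem ptStar_ptStar_balls_subset [PseudoMetricSpace X] (x : X) (r : ℝ) :
    ptStar x (range fun y => ptStar y (range fun c => Metric.ball c r)) ⊆
      Metric.ball x (4 * r) := by
  intro z hz
  obtain ⟨_, ⟨y, rfl⟩, hxy, hzy⟩ := mem_ptStar.1 hz
  have hx := ptStar_balls_subset y r hxy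
  have hz := ptStar_balls_subset y r hzy
  rw [Metric.mem_ball] at *
  linarith [dist_triangle_right z x y]

theorem exists_isOpenCover_ptStar_subset [PseudoMetricSpace X] :
    ∃ u : ℕ → Set (Set X), (∀ n, IsOpenCover (u n)) ∧
      ∀ (x : X) (U : Set X), IsOpen U → x ∈ U →
        ∃ n, ptStar x (range fun y : X => ptStar y (u n)) ⊆ U := by
  refine ⟨fun n => range fun c => Metric.ball c (1 / (n + 1)), fun n => ⟨?_, ?_⟩,
    fun x U hU hx => ?_⟩
  · rintro _ ⟨c, rfl⟩
    exact Metric.isOpen_ball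
  · exact eq_univ_of_forall fun x => ⟨_, ⟨x, rfl⟩, Metric.mem_ball_self (by positivity)⟩
  · obtain ⟨ε, hε, hεU⟩ := Metric.isOpen_iff.1 hU x hx
    obtain ⟨n, hn⟩ := exists_nat_one_div_lt (div_pos hε four_pos)
    exact ⟨n, (ptStar_ptStar_balls_subset x _).trans
      ((Metric.ball_subset_ball (by linarith)).trans hεU)⟩

end ptStar

/-- `rel n x y` abstracts "`x` and `y` lie in a common member of each of `𝒰₀, …, 𝒰ₙ`". -/
structure StarDevelopment (X : Type) [TopologicalSpace X] where
  rel : ℕ → X → X → Prop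
  rel_refl (n : ℕ) (x : X) : rel n x x
  rel_symm {n : ℕ} {x y : X} : rel n x y → rel n y x
  rel_anti {m n : ℕ} {x y : X} : m ≤ n → rel n x y → rel m x y
  isOpen_setOf_rel (n : ℕ) (x : X) : IsOpen {y | rel n x y}
  exists_isOpen_rel (n : ℕ) (z : X) :
    ∃ V : Set X, IsOpen V ∧ z ∈ V ∧ ∀ y ∈ V, ∀ y' ∈ V, rel n y y'
  exists_star_subset (x : X) (U : Set X) :
    IsOpen U → x ∈ U → ∃ n, {z | ∃ y, rel n x y ∧ rel n y z} ⊆ U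

namespace StarDevelopment

variable {X : Type} [TopologicalSpace X] (D : StarDevelopment X)

def ball (n : ℕ) (x : X) : Set X := {y | D.rel n x y}

def star (n : ℕ) (x : X) : Set X := {z | ∃ y, D.rel n x y ∧ D.rel n y z}

theorem mem_ball_self (n : ℕ) (x : X) : x ∈ D.ball n x := D.rel_refl n x

theorem isOpen_ball (n : ℕ) (x : X) : IsOpen (D.ball n x) := D.isOpen_setOf_rel n x

theorem ball_subset_star (n : ℕ) (x : X) : D.ball n x ⊆ D.star n x :=
  fun _ hz => ⟨x, D.rel_refl n x, hz⟩

theorem exists_star_subset_of_mem_nhds {x : X} {U : Set X} (hU : U ∈ 𝓝 x) :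
    ∃ n, D.star n x ⊆ U := by
  obtain ⟨V, hVU, hV, hxV⟩ := mem_nhds_iff.1 hU
  obtain ⟨n, hn⟩ := D.exists_star_subset x V hV hxV
  exact ⟨n, hn.trans hVU⟩

theorem exists_disjoint_star {x : X} {B : Set X} (hB : IsClosed B) (hx : x ∉ B) :
    ∃ n, Disjoint (D.star n x) B := by
  obtain ⟨n, hn⟩ := D.exists_star_subset_of_mem_nhds (hB.isOpen_compl.mem_nhds hx)
  exact ⟨n, subset_compl_iff_disjoint_right.1 hn⟩

theorem mem_star_or_mem_star {a b : ℕ} {x y w : X} (hx : D.rel a x w) (hy : D.rel b y w) :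
    y ∈ D.star a x ∨ x ∈ D.star b y :=
  (le_total a b).imp (fun h => ⟨w, hx, D.rel_symm (D.rel_anti h hy)⟩)
    fun h => ⟨w, hy, D.rel_symm (D.rel_anti h hx)⟩

def thicken (ν : X → ℕ) (A : Set X) : Set X := ⋃ x ∈ A, D.ball (ν x) x

theorem isOpen_thicken (ν : X → ℕ) (A : Set X) : IsOpen (D.thicken ν A) :=
  isOpen_biUnion fun x _ => D.isOpen_ball _ x

theorem subset_thicken (ν : X → ℕ) (A : Set X) : A ⊆ D.thicken ν A :=
  fun x hx => mem_biUnion hx (D.mem_ball_self _ x)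

theorem thicken_singleton (n : ℕ) (z : X) : D.thicken (fun _ => n) {z} = D.ball n z := by
  simp [thicken]

theorem disjoint_thicken {ν μ : X → ℕ} {A B : Set X}
    (hA : ∀ x ∈ A, Disjoint (D.star (ν x) x) B) (hB : ∀ y ∈ B, Disjoint (D.star (μ y) y) A) :
    Disjoint (D.thicken ν A) (D.thicken μ B) := by
  refine disjoint_left.2 fun w hwA hwB => ?_
  obtain ⟨x, hx, hxw⟩ := mem_iUnion₂.1 hwA
  obtain ⟨y, hy, hyw⟩ := mem_iUnion₂.1 hwB
  rcases D.mem_star_or_mem_star hxw hyw with h | h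
  · exact disjoint_left.1 (hA x hx) h hy
  · exact disjoint_left.1 (hB y hy) h hx

include D in
theorem normalSpace : NormalSpace X where
  normal A B hA hB hAB := by
    have hsepA : ∀ x ∈ A, ∃ n, Disjoint (D.star n x) B :=
      fun x hx => D.exists_disjoint_star hB (hAB.notMem_of_mem_left hx)
    have hsepB : ∀ y ∈ B, ∃ n, Disjoint (D.star n y) A :=
      fun y hy => D.exists_disjoint_star hA (hAB.notMem_of_mem_right hy)
    choose! ν hν using hsepA
    choose! μ hμ using hsepB
    exact ⟨_, _, D.isOpen_thicken ν A, D.isOpen_thicken μ B, D.subset_thicken ν A,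
      D.subset_thicken μ B, D.disjoint_thicken hν hμ⟩

include D in
theorem cwNormal : CwNormal X := by
  intro S A hA hAd
  have hsep : ∀ p, ∀ x ∈ A p, ∃ n, ∀ q ≠ p, Disjoint (D.star n x) (A q) := by
    intro p x hx
    obtain ⟨N, hN, hsub⟩ := hAd x
    obtain ⟨n, hn⟩ := D.exists_star_subset_of_mem_nhds hN
    exact ⟨n, fun q hqp => disjoint_left.2 fun w hw hwq =>
      hqp (hsub ⟨w, hwq, hn hw⟩ ⟨x, hx, mem_of_mem_nhds hN⟩)⟩
  choose! ν hν using hsep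
  set G := fun p => D.thicken (ν p) (A p)
  have hG : Pairwise (Disjoint on G) := fun p q hpq =>
    D.disjoint_thicken (fun x hx => hν p x hx q hpq.symm) fun y hy => hν q y hy p hpq
  choose! μ hμ using fun p x (hx : x ∈ A p) =>
    D.exists_star_subset_of_mem_nhds ((D.isOpen_thicken (ν p) _).mem_nhds (D.subset_thicken _ _ hx))
  refine ⟨fun p => D.thicken (μ p) (A p), fun p => D.isOpen_thicken _ _,
    fun p => D.subset_thicken _ _, fun z => ?_⟩
  have hz : ∃ n, ∀ p, z ∉ G p → Disjoint (D.star n z) (A p) := by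
    by_cases h : ∃ t, z ∈ G t
    · obtain ⟨t, ht⟩ := h
      obtain ⟨n, hn⟩ := D.exists_star_subset_of_mem_nhds ((D.isOpen_thicken _ _).mem_nhds ht)
      exact ⟨n, fun p hp => (hG fun htp : t = p => hp (htp ▸ ht)).mono hn (D.subset_thicken _ _)⟩
    · simp only [not_exists] at h
      obtain ⟨n, hn⟩ := D.exists_disjoint_star (hAd.locallyFinite.isClosed_iUnion hA)
        (by simpa using fun p hp => h p (D.subset_thicken _ _ hp))
      exact ⟨n, fun p _ => hn.mono_right (subset_iUnion A p)⟩
  obtain ⟨n, hn⟩ := hz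
  refine ⟨D.ball n z, (D.isOpen_ball n z).mem_nhds (D.mem_ball_self n z), ?_⟩
  have hmeet : ∀ p, (D.thicken (μ p) (A p) ∩ D.ball n z).Nonempty → z ∈ G p := by
    intro p hp
    by_contra hzp
    have hdisj : Disjoint (D.ball n z) (D.thicken (μ p) (A p)) := by
      rw [← D.thicken_singleton n z]
      exact D.disjoint_thicken (by simpa using hn p hzp)
        fun x hx => disjoint_singleton_right.2 fun hz => hzp (hμ p x hx hz)
    exact not_disjoint_iff_nonempty_inter.2 hp hdisj.symm
  intro p hp q hq
  by_contra hpq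
  exact disjoint_left.1 (hG hpq) (hmeet p hp) (hmeet q hq)

def cell (n : ℕ) (p : X) : Set X := (D.exists_isOpen_rel n p).choose

theorem isOpen_cell (n : ℕ) (p : X) : IsOpen (D.cell n p) := (D.exists_isOpen_rel n p).choose_spec.1

theorem mem_cell_self (n : ℕ) (p : X) : p ∈ D.cell n p := (D.exists_isOpen_rel n p).choose_spec.2.1

theorem rel_of_mem_cell {n : ℕ} {p y y' : X} (hy : y ∈ D.cell n p) (hy' : y' ∈ D.cell n p) :
    D.rel n y y' :=
  (D.exists_isOpen_rel n p).choose_spec.2.2 y hy y' hy'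

/-- Stone's trick: the points whose first cell, in a well-order of `X`, is the cell of `p`, and
which lie there together with their whole `m`-ball. -/
def seed (n m : ℕ) (p : X) : Set X :=
  {x | D.ball m x ⊆ D.cell n p ∧ ∀ q, WellOrderingRel q p → x ∉ D.cell n q}

def core (n m : ℕ) (p : X) : Set X := closure (D.seed n m p)

theorem eq_of_mem_seed_of_rel {n m : ℕ} {p q y y' : X} (hy : y ∈ D.seed n m p)
    (hy' : y' ∈ D.seed n m q) (h : D.rel m y y') : p = q := by
  rcases trichotomous_of WellOrderingRel p q with hpq | rfl | hqp
  · exact absurd (hy.1 h) (hy'.2 p hpq)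
  · rfl
  · exact absurd (hy'.1 (D.rel_symm h)) (hy.2 q hqp)

theorem core_subset_cell (n m : ℕ) (p : X) : D.core n m p ⊆ D.cell n p := by
  intro z hz
  obtain ⟨V, hV, hzV, hVrel⟩ := D.exists_isOpen_rel m z
  obtain ⟨y, hyV, hy⟩ := mem_closure_iff.1 hz V hV hzV
  exact hy.1 (hVrel y hyV z hzV)

theorem discreteFam_core (n m : ℕ) : DiscreteFam (D.core n m) := by
  intro z
  obtain ⟨V, hV, hzV, hVrel⟩ := D.exists_isOpen_rel m z
  refine ⟨V, hV.mem_nhds hzV, fun p hp q hq => ?_⟩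
  obtain ⟨y, hy, hyV⟩ := (closure_inter_open_nonempty_iff hV).1 hp
  obtain ⟨y', hy', hy'V⟩ := (closure_inter_open_nonempty_iff hV).1 hq
  exact D.eq_of_mem_seed_of_rel hy hy' (hVrel y hyV y' hy'V)

theorem exists_mem_core (n : ℕ) (x : X) : ∃ m p, x ∈ D.core n m p := by
  have hwf : WellFounded (WellOrderingRel : X → X → Prop) := IsWellFounded.wf
  have hne : {p | x ∈ D.cell n p}.Nonempty := ⟨x, D.mem_cell_self n x⟩
  have hx : x ∈ D.cell n (hwf.min _ hne) := hwf.min_mem _ hne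
  obtain ⟨m, hm⟩ := D.exists_star_subset_of_mem_nhds ((D.isOpen_cell n _).mem_nhds hx)
  exact ⟨m, _, subset_closure ⟨(D.ball_subset_star m x).trans hm,
    fun q hq hxq => hwf.not_lt_min {p | x ∈ D.cell n p} hxq hq⟩⟩

theorem exists_continuous_lp_infty (n m : ℕ) :
    ∃ e : X → lp (fun _ : X => ℝ) ∞, Continuous e ∧
      ∀ p x y, x ∈ D.core n m p → dist (e x) (e y) < 1 → D.rel n x y := by
  have := D.normalSpace
  obtain ⟨V, hV, hcoreV, hVd⟩ :=
    D.cwNormal X (D.core n m) (fun p => isClosed_closure) (D.discreteFam_core n m)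
  obtain ⟨e, he, hmem⟩ := exists_continuous_lp_infty_of_locallyFinite
    (W := fun p => V p ∩ D.cell n p) (fun p => isClosed_closure)
    (fun p => (hV p).inter (D.isOpen_cell n p))
    (fun p => subset_inter (hcoreV p) (D.core_subset_cell n m p))
    (hVd.locallyFinite.subset fun p => inter_subset_left)
  exact ⟨e, he, fun p x y hx hxy =>
    D.rel_of_mem_cell (D.core_subset_cell n m p hx) (hmem p x y hx hxy).2⟩

include D in
theorem metrizableSpace [T0Space X] : MetrizableSpace X := by
  choose e he hrel using fun k : ℕ × ℕ => D.exists_continuous_lp_infty k.1 k.2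
  have : PseudoMetrizableSpace X := pseudoMetrizableSpace_of_countable_initial he fun x U hU => by
    obtain ⟨n, hn⟩ := D.exists_star_subset_of_mem_nhds hU
    obtain ⟨m, p, hx⟩ := D.exists_mem_core n x
    exact ⟨(n, m), Metric.ball (e (n, m) x) 1, Metric.ball_mem_nhds _ one_pos,
      fun y hy => hn ⟨x, D.rel_refl n x, hrel (n, m) p x y hx (Metric.mem_ball'.1 hy)⟩⟩
  infer_instance

def ofOpenCovers (u : ℕ → Set (Set X)) (hu : ∀ n, IsOpenCover (u n))
    (hbase : ∀ (x : X) (U : Set X), IsOpen U → x ∈ U →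
      ∃ n, ptStar x (range fun y : X => ptStar y (u n)) ⊆ U) :
    StarDevelopment X where
  rel n x y := ∀ i ≤ n, y ∈ ptStar x (u i)
  rel_refl n x i _ := (hu i).mem_ptStar_self x
  rel_symm h i hi := mem_ptStar_comm.1 (h i hi)
  rel_anti hmn h i hi := h i (hi.trans hmn)
  isOpen_setOf_rel n x := by
    have : {y | ∀ i ≤ n, y ∈ ptStar x (u i)} = ⋂ i ∈ Iic n, ptStar x (u i) := by
      ext
      simp
    rw [this]
    exact (finite_Iic n).isOpen_biInter fun i _ => (hu i).isOpen_ptStar x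
  exists_isOpen_rel n z := by
    choose U hU hzU using fun i => (hu i).exists_mem z
    refine ⟨⋂ i ∈ Iic n, U i, (finite_Iic n).isOpen_biInter fun i _ => (hu i).1 _ (hU i),
      mem_iInter₂.2 fun i _ => hzU i, fun y hy y' hy' i hi => ?_⟩
    exact mem_ptStar.2 ⟨U i, hU i, mem_iInter₂.1 hy i hi, mem_iInter₂.1 hy' i hi⟩
  exists_star_subset x U hU hx := by
    obtain ⟨n, hn⟩ := hbase x U hU hx
    refine ⟨n, fun z ⟨y, hxy, hyz⟩ => hn (mem_ptStar.2 ⟨_, ⟨y, rfl⟩, ?_, hyz n le_rfl⟩)⟩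
    exact mem_ptStar_comm.1 (hxy n le_rfl)

end StarDevelopment

/-- A T₀ space is metrizable iff there is a sequence of open covers `𝒰_n` such that the
sets `st(x, st(𝒰_n))` form a neighborhood basis at every point `x`. -/
theorem stmt19 (X : Type) [TopologicalSpace X] [T0Space X] :
    MetrizableSpace X ↔
      ∃ u : ℕ → Set (Set X), (∀ n, IsOpenCover (u n)) ∧
        ∀ (x : X) (U : Set X), IsOpen U → x ∈ U →
          ∃ n, ptStar x (Set.range fun y : X => ptStar y (u n)) ⊆ U := by
  constructor
  · intro _
    let := metrizableSpaceMetric X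
    exact exists_isOpenCover_ptStar_subset
  · rintro ⟨u, hu, hbase⟩
    exact (StarDevelopment.ofOpenCovers u hu hbase).metrizableSpace
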